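/- arXiv:2308.13500 — 5 statements merged into one kernel-verified Lean document; each statement's English description precedes it below -/
import Mathlib

section
/- Let d ≥ 1, let X, Y be Hermitian complex d×d matrices and let O be any complex d×d matrix. For λ ∈ [0,1] set H_λ = Y + λ(X − Y) and Z_λ = Tr[exp(H_λ)], a positive real number. Then Tr[exp(X)·O]/Tr[exp(X)] − Tr[exp(Y)·O]/Tr[exp(Y)] = ∫₀¹ ∫₀¹ ( Tr[exp(τH_λ)·(X−Y)·exp((1−τ)H_λ)·O]/Z_λ − (Tr[exp(H_λ)·(X−Y)]/Z_λ)·(Tr[exp(H_λ)·O]/Z_λ) ) dτ dλ. -/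
open Matrix NormedSpace

open intervalIntegral

set_option linter.unusedSectionVars false
set_option maxHeartbeats 1000000

section AbstractBanach
variable {A : Type*} [NormedRing A] [NormedAlgebra ℝ A] [CompleteSpace A] [NormOneClass A]

theorem my_exp_continuous : Continuous (exp : A → A) := by
  letI : NormedAlgebra ℚ A := NormedAlgebra.restrictScalars ℚ ℝ A
  exact exp_continuous

theorem my_exp_add_of_commute {x y : A} (hxy : Commute x y) : exp (x + y) = exp x * exp y := by
  letI : NormedAlgebra ℚ A := NormedAlgebra.restrictScalars ℚ ℝ A
  exact exp_add_of_commute hxy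

theorem my_norm_exp_le (M : A) : ‖exp M‖ ≤ Real.exp ‖M‖ := by
  rw [exp_eq_tsum ℝ]
  have hb : ∀ n : ℕ, ‖((n.factorial : ℝ))⁻¹ • M ^ n‖ ≤ ‖M‖ ^ n / n.factorial := by
    intro n
    rw [norm_smul, norm_inv, Real.norm_natCast, div_eq_inv_mul]
    gcongr
    exact norm_pow_le M n
  have hs : Summable fun n : ℕ => ‖((n.factorial : ℝ))⁻¹ • M ^ n‖ :=
    Summable.of_nonneg_of_le (fun n => norm_nonneg _) hb
      (Real.summable_pow_div_factorial ‖M‖)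
  calc ‖∑' n : ℕ, ((n.factorial : ℝ))⁻¹ • M ^ n‖ ≤ ∑' n : ℕ, ‖((n.factorial : ℝ))⁻¹ • M ^ n‖ :=
        norm_tsum_le_tsum_norm hs
    _ ≤ ∑' n : ℕ, ‖M‖ ^ n / n.factorial :=
        Summable.tsum_le_tsum hb hs (Real.summable_pow_div_factorial ‖M‖)
    _ = Real.exp ‖M‖ := by rw [Real.exp_eq_exp_ℝ, exp_eq_tsum_div]

theorem my_duhamel (P Q : A) :
    exp P - exp Q = ∫ τ in (0:ℝ)..1, exp (τ • P) * (P - Q) * exp ((1 - τ) • Q) := by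
  have hderiv : ∀ τ ∈ Set.uIcc (0:ℝ) 1,
      HasDerivAt (fun s : ℝ => exp (s • P) * exp ((1 - s) • Q))
        (exp (τ • P) * (P - Q) * exp ((1 - τ) • Q)) τ := by
    intro τ _
    have h1 : HasDerivAt (fun s : ℝ => exp (s • P)) (exp (τ • P) * P) τ :=
      hasDerivAt_exp_smul_const P τ
    have hs : HasDerivAt (fun s : ℝ => 1 - s) (-1) τ := (hasDerivAt_id τ).const_sub 1
    have h2 : HasDerivAt (fun s : ℝ => exp ((1 - s) • Q))
        ((-1 : ℝ) • (Q * exp ((1 - τ) • Q))) τ :=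
      (hasDerivAt_exp_smul_const' Q (1 - τ)).scomp τ hs
    have : HasDerivAt (fun s : ℝ => exp (s • P) * exp ((1 - s) • Q)) _ τ := h1.mul h2
    convert this using 1
    simp only [neg_smul, one_smul, mul_neg, sub_mul, mul_sub, mul_assoc]
    abel
  have hcont : Continuous fun τ : ℝ => exp (τ • P) * (P - Q) * exp ((1 - τ) • Q) := by
    have e1 : Continuous fun τ : ℝ => exp (τ • P) :=
      my_exp_continuous.comp (continuous_id.smul continuous_const)
    have e2 : Continuous fun τ : ℝ => exp ((1 - τ) • Q) :=
      my_exp_continuous.comp ((continuous_const.sub continuous_id).smul continuous_const)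
    exact (e1.mul continuous_const).mul e2
  have := intervalIntegral.integral_eq_sub_of_hasDerivAt hderiv
    (hcont.intervalIntegrable 0 1)
  rw [this]
  simp [exp_zero]

theorem my_exp_sub_le (M N : A) :
    ‖exp M - exp N‖ ≤ ‖M - N‖ * Real.exp (‖M‖ + ‖N‖) := by
  rw [my_duhamel M N]
  have := intervalIntegral.norm_integral_le_of_norm_le_const
    (C := ‖M - N‖ * Real.exp (‖M‖ + ‖N‖))
    (f := fun τ : ℝ => exp (τ • M) * (M - N) * exp ((1 - τ) • N)) (a := 0) (b := 1) ?_
  · simpa using this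
  · intro τ hτ
    rw [Set.uIoc_of_le (by norm_num : (0:ℝ) ≤ 1)] at hτ
    obtain ⟨h0, h1⟩ := hτ
    calc ‖exp (τ • M) * (M - N) * exp ((1 - τ) • N)‖
        ≤ ‖exp (τ • M)‖ * ‖M - N‖ * ‖exp ((1 - τ) • N)‖ := by
          exact (norm_mul_le _ _).trans (by gcongr; exact norm_mul_le _ _)
      _ ≤ Real.exp ‖τ • M‖ * ‖M - N‖ * Real.exp ‖(1 - τ) • N‖ := by
          gcongr <;> [exact my_norm_exp_le _; exact my_norm_exp_le _]
      _ ≤ Real.exp ‖M‖ * ‖M - N‖ * Real.exp ‖N‖ := by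
          have b1 : ‖τ • M‖ ≤ ‖M‖ := by
            rw [norm_smul, Real.norm_eq_abs, abs_of_pos h0]
            nlinarith [norm_nonneg M]
          have b2 : ‖(1 - τ) • N‖ ≤ ‖N‖ := by
            rw [norm_smul, Real.norm_eq_abs, abs_of_nonneg (by linarith : (0:ℝ) ≤ 1 - τ)]
            nlinarith [norm_nonneg N]
          gcongr <;> first | exact Real.exp_le_exp.2 b1 | exact Real.exp_le_exp.2 b2
      _ = ‖M - N‖ * Real.exp (‖M‖ + ‖N‖) := by rw [Real.exp_add]; ring

theorem my_hasDerivAt_exp_affine (P B : A) (t₀ : ℝ) :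
    HasDerivAt (fun t : ℝ => exp (P + t • B))
      (∫ τ in (0:ℝ)..1, exp (τ • (P + t₀ • B)) * B * exp ((1 - τ) • (P + t₀ • B))) t₀ := by
  set H : ℝ → A := fun t => P + t • B with hHdef
  set D := ∫ τ in (0:ℝ)..1, exp (τ • H t₀) * B * exp ((1 - τ) • H t₀) with hD
  have hcont : ∀ t : ℝ, Continuous fun τ : ℝ =>
      exp (τ • H t) * B * exp ((1 - τ) • H t₀) :=
    fun t => ((my_exp_continuous.comp (continuous_id.smul continuous_const)).mul
      continuous_const).mul
      (my_exp_continuous.comp ((continuous_const.sub continuous_id).smul continuous_const))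
  rw [hasDerivAt_iff_tendsto_slope]
  have key : ∀ t : ℝ, t ≠ t₀ → slope (fun t => exp (H t)) t₀ t - D =
      ∫ τ in (0:ℝ)..1,
        (exp (τ • H t) - exp (τ • H t₀)) * B * exp ((1 - τ) • H t₀) := by
    intro t ht
    have hsub : H t - H t₀ = (t - t₀) • B := by
      simp only [hHdef, add_sub_add_left_eq_sub, sub_smul]
    have h1 : slope (fun t => exp (H t)) t₀ t =
        ∫ τ in (0:ℝ)..1, exp (τ • H t) * B * exp ((1 - τ) • H t₀) := by
      rw [slope_def_module, my_duhamel (H t) (H t₀), hsub]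
      have : ∀ τ : ℝ, exp (τ • H t) * ((t - t₀) • B) * exp ((1 - τ) • H t₀)
          = (t - t₀) • (exp (τ • H t) * B * exp ((1 - τ) • H t₀)) := by
        intro τ; rw [mul_smul_comm, smul_mul_assoc]
      simp_rw [this]
      rw [intervalIntegral.integral_smul, smul_smul,
        inv_mul_cancel₀ (sub_ne_zero.2 ht), one_smul]
    rw [h1, hD, ← intervalIntegral.integral_sub ((hcont t).intervalIntegrable 0 1)
      ((hcont t₀).intervalIntegrable 0 1)]
    congr 1
    funext τ
    rw [← sub_mul, ← sub_mul]
  -- now the bound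
  set R : ℝ := ‖P‖ + (|t₀| + 1) * ‖B‖ with hR
  set C : ℝ := ‖B‖ * Real.exp (R + R) * ‖B‖ * Real.exp R with hC
  have hCnn : 0 ≤ C := by positivity
  have bound : ∀ t : ℝ, t ≠ t₀ → |t - t₀| ≤ 1 →
      ‖slope (fun t => exp (H t)) t₀ t - D‖ ≤ C * |t - t₀| := by
    intro t ht htd
    rw [key t ht]
    have hHt : ∀ s : ℝ, |s - t₀| ≤ 1 → ‖H s‖ ≤ R := by
      intro s hs
      calc ‖P + s • B‖ ≤ ‖P‖ + ‖s • B‖ := norm_add_le _ _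
        _ ≤ R := by
          rw [norm_smul, Real.norm_eq_abs, hR]
          have : |s| ≤ |t₀| + 1 := by
            have := abs_sub_abs_le_abs_sub s t₀
            linarith
          nlinarith [norm_nonneg B]
    have hb : ∀ τ ∈ Set.uIoc (0:ℝ) 1,
        ‖(exp (τ • H t) - exp (τ • H t₀)) * B * exp ((1 - τ) • H t₀)‖
          ≤ |t - t₀| * C := by
      intro τ hτ
      rw [Set.uIoc_of_le (by norm_num : (0:ℝ) ≤ 1)] at hτ
      obtain ⟨h0, h1⟩ := hτ
      have hsm : ∀ (s : ℝ) (M : A), 0 ≤ s → s ≤ 1 → ‖M‖ ≤ R → ‖s • M‖ ≤ R := by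
        intro s M hs0 hs1 hM
        rw [norm_smul, Real.norm_eq_abs, abs_of_nonneg hs0]
        nlinarith [norm_nonneg M, (norm_nonneg M).trans hM]
      have e1 : ‖exp (τ • H t) - exp (τ • H t₀)‖ ≤ |t - t₀| * ‖B‖ * Real.exp (R + R) := by
        have := my_exp_sub_le (τ • H t) (τ • H t₀)
        have hd : ‖τ • H t - τ • H t₀‖ ≤ |t - t₀| * ‖B‖ := by
          rw [← smul_sub, norm_smul, Real.norm_eq_abs, abs_of_pos h0]
          have : H t - H t₀ = (t - t₀) • B := by
            simp only [hHdef, add_sub_add_left_eq_sub, sub_smul]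
          rw [this, norm_smul, Real.norm_eq_abs]
          nlinarith [abs_nonneg (t - t₀), norm_nonneg B, mul_nonneg (abs_nonneg (t-t₀)) (norm_nonneg B)]
        have hee : Real.exp (‖τ • H t‖ + ‖τ • H t₀‖) ≤ Real.exp (R + R) := by
          apply Real.exp_le_exp.2
          have := hsm τ (H t) (le_of_lt h0) h1 (hHt t htd)
          have := hsm τ (H t₀) (le_of_lt h0) h1 (hHt t₀ (by simpa using zero_le_one))
          linarith
        calc ‖exp (τ • H t) - exp (τ • H t₀)‖
            ≤ ‖τ • H t - τ • H t₀‖ * Real.exp (‖τ • H t‖ + ‖τ • H t₀‖) := this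
          _ ≤ (|t - t₀| * ‖B‖) * Real.exp (R + R) :=
              mul_le_mul hd hee (Real.exp_pos _).le (by positivity)
      have e2 : ‖exp ((1 - τ) • H t₀)‖ ≤ Real.exp R := by
        refine (my_norm_exp_le _).trans (Real.exp_le_exp.2 ?_)
        exact hsm (1 - τ) (H t₀) (by linarith) (by linarith) (hHt t₀ (by simpa using zero_le_one))
      calc ‖(exp (τ • H t) - exp (τ • H t₀)) * B * exp ((1 - τ) • H t₀)‖
          ≤ ‖exp (τ • H t) - exp (τ • H t₀)‖ * ‖B‖ * ‖exp ((1 - τ) • H t₀)‖ :=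
            (norm_mul_le _ _).trans (by gcongr; exact norm_mul_le _ _)
        _ ≤ (|t - t₀| * ‖B‖ * Real.exp (R + R)) * ‖B‖ * Real.exp R :=
            mul_le_mul (mul_le_mul e1 le_rfl (norm_nonneg B) (by positivity)) e2
              (norm_nonneg _) (by positivity)
        _ = |t - t₀| * C := by rw [hC]; ring
    have := intervalIntegral.norm_integral_le_of_norm_le_const hb
    simpa [mul_comm] using this
  -- conclude
  have h0 : Filter.Tendsto (fun t : ℝ => C * |t - t₀|) (nhdsWithin t₀ {t₀}ᶜ) (nhds 0) := by
    have : Filter.Tendsto (fun t : ℝ => C * |t - t₀|) (nhds t₀) (nhds (C * |t₀ - t₀|)) :=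
      (continuous_const.mul ((continuous_id.sub continuous_const).abs)).tendsto t₀
    simpa using this.mono_left nhdsWithin_le_nhds
  rw [← tendsto_sub_nhds_zero_iff]
  apply squeeze_zero_norm' _ h0
  have h1 : ∀ᶠ t in nhdsWithin t₀ {t₀}ᶜ, |t - t₀| ≤ 1 := by
    apply Filter.eventually_iff_exists_mem.2
    refine ⟨Metric.closedBall t₀ 1 ∩ {t₀}ᶜ, Filter.inter_mem
      (nhdsWithin_le_nhds (Metric.closedBall_mem_nhds t₀ one_pos)) self_mem_nhdsWithin, ?_⟩
    intro t ⟨htb, _⟩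
    simpa [Real.dist_eq] using htb
  have h2 : ∀ᶠ t in nhdsWithin t₀ {t₀}ᶜ, t ≠ t₀ := by
    filter_upwards [self_mem_nhdsWithin] with t ht using ht
  filter_upwards [h1, h2] with t ht1 ht2
  exact bound t ht2 ht1

end AbstractBanach

theorem trace_exp_ne_zero {d : ℕ} (hd : 1 ≤ d) {H : Matrix (Fin d) (Fin d) ℂ}
    (hH : H.IsHermitian) : trace (exp H) ≠ 0 := by
  haveI : Nonempty (Fin d) := ⟨⟨0, hd⟩⟩
  set U : Matrix (Fin d) (Fin d) ℂ := (hH.eigenvectorUnitary : Matrix (Fin d) (Fin d) ℂ)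
    with hUdef
  have hU : IsUnit U := (Unitary.toUnits hH.eigenvectorUnitary).isUnit
  have hstar : U⁻¹ = star U :=
    Matrix.inv_eq_left_inv (Unitary.coe_star_mul_self hH.eigenvectorUnitary)
  have hspec : H = U * diagonal (RCLike.ofReal ∘ hH.eigenvalues) * U⁻¹ := by
    rw [hstar]; exact hH.spectral_theorem
  rw [hspec, Matrix.exp_conj _ _ hU, Matrix.trace_conj hU, Matrix.exp_diagonal,
    trace_diagonal]
  have : ∀ i : Fin d, exp ((RCLike.ofReal ∘ hH.eigenvalues) i)
      = (Real.exp (hH.eigenvalues i) : ℂ) := by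
    intro i
    rw [← Complex.exp_eq_exp_ℂ, Function.comp_apply]
    exact (Complex.ofReal_exp _).symm
  simp only [Pi.exp_def]
  rw [Finset.sum_congr rfl (fun i _ => this i), ← Complex.ofReal_sum]
  simp only [ne_eq, Complex.ofReal_eq_zero]
  have : 0 < ∑ i : Fin d, Real.exp (hH.eigenvalues i) :=
    Finset.sum_pos (fun i _ => Real.exp_pos _) Finset.univ_nonempty
  exact ne_of_gt this

theorem key_deriv {d : ℕ} (hd : 1 ≤ d) (X Y O : Matrix (Fin d) (Fin d) ℂ)
    (hHerm : ∀ t : ℝ, (Y + t • (X - Y)).IsHermitian) (lam : ℝ) :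
    HasDerivAt
      (fun t : ℝ => trace (exp (Y + t • (X - Y)) * O) / trace (exp (Y + t • (X - Y))))
      ((∫ τ in (0:ℝ)..1, trace (exp (τ • (Y + lam • (X - Y))) * (X - Y) *
            exp ((1 - τ) • (Y + lam • (X - Y))) * O)) /
          trace (exp (Y + lam • (X - Y)))
        - trace (exp (Y + lam • (X - Y)) * (X - Y)) / trace (exp (Y + lam • (X - Y))) *
          (trace (exp (Y + lam • (X - Y)) * O) / trace (exp (Y + lam • (X - Y))))) lam := by
  haveI : Nonempty (Fin d) := ⟨⟨0, hd⟩⟩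
  letI : SeminormedRing (Matrix (Fin d) (Fin d) ℂ) := Matrix.linftyOpSemiNormedRing
  letI : NormedRing (Matrix (Fin d) (Fin d) ℂ) := Matrix.linftyOpNormedRing
  letI : NormedAlgebra ℝ (Matrix (Fin d) (Fin d) ℂ) := Matrix.linftyOpNormedAlgebra
  letI : NormOneClass (Matrix (Fin d) (Fin d) ℂ) := Matrix.linfty_opNormOneClass
  set B := X - Y with hB
  set H : ℝ → Matrix (Fin d) (Fin d) ℂ := fun t => Y + t • B with hH
  set g : ℝ → Matrix (Fin d) (Fin d) ℂ :=
    fun τ => exp (τ • H lam) * B * exp ((1 - τ) • H lam) with hg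
  set D := ∫ τ in (0:ℝ)..1, g τ with hD
  have hderivD : HasDerivAt (fun t : ℝ => exp (H t)) D lam := my_hasDerivAt_exp_affine Y B lam
  have hgcont : Continuous g :=
    ((my_exp_continuous.comp (continuous_id.smul continuous_const)).mul continuous_const).mul
      (my_exp_continuous.comp ((continuous_const.sub continuous_id).smul continuous_const))
  -- the trace ∘ (· * O) continuous linear map
  have mkL : ∀ W : Matrix (Fin d) (Fin d) ℂ,
      ∃ L : Matrix (Fin d) (Fin d) ℂ →L[ℝ] ℂ, ∀ M, L M = trace (M * W) := by
    intro W
    refine ⟨LinearMap.toContinuousLinearMap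
      { toFun := fun M => trace (M * W)
        map_add' := fun M N => by simp [add_mul]
        map_smul' := fun r M => by simp [smul_mul_assoc] }, fun M => rfl⟩
  obtain ⟨LO, hLO⟩ := mkL O
  obtain ⟨LB, hLB⟩ := mkL B
  obtain ⟨L1, hL1⟩ := mkL 1
  -- trace of g τ is constant
  have hgtr : ∀ τ : ℝ, trace (g τ) = trace (exp (H lam) * B) := by
    intro τ
    have hcomm : Commute ((1 - τ) • H lam) (τ • H lam) :=
      ((Commute.refl (H lam)).smul_left _).smul_right _
    have hmul : exp ((1 - τ) • H lam) * exp (τ • H lam) = exp (H lam) := by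
      refine (my_exp_add_of_commute hcomm).symm.trans ?_
      rw [← add_smul]
      norm_num
      rfl
    calc trace (exp (τ • H lam) * B * exp ((1 - τ) • H lam))
        = trace (exp ((1 - τ) • H lam) * (exp (τ • H lam) * B)) :=
          trace_mul_comm _ _
      _ = trace (exp (H lam) * B) := by rw [← mul_assoc, hmul]
  -- derivative of numerator
  have hN : HasDerivAt (fun t : ℝ => trace (exp (H t) * O)) (trace (D * O)) lam := by
    have := LO.hasFDerivAt.comp_hasDerivAt lam hderivD
    rw [← hLO D]
    exact this.congr_of_eventuallyEq (Filter.Eventually.of_forall fun t => (hLO _).symm)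
  have hZ : HasDerivAt (fun t : ℝ => trace (exp (H t))) (trace (D * 1)) lam := by
    have := L1.hasFDerivAt.comp_hasDerivAt lam hderivD
    rw [← hL1 D]
    exact this.congr_of_eventuallyEq
      (Filter.Eventually.of_forall fun t => by rw [Function.comp_apply, hL1, mul_one])
  have hZ' : HasDerivAt (fun t : ℝ => trace (exp (H t))) (trace (exp (H lam) * B)) lam := by
    have hDtr : trace (D * 1) = trace (exp (H lam) * B) := by
      have h1 : trace (D * 1) = L1 D := by rw [hL1]
      have h2 : L1 D = ∫ τ in (0:ℝ)..1, L1 (g τ) :=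
        (L1.intervalIntegral_comp_comm (hgcont.intervalIntegrable 0 1)).symm
      rw [h1, h2]
      have h3 : ∀ τ : ℝ, L1 (g τ) = trace (exp (H lam) * B) := by
        intro τ; rw [hL1, mul_one, hgtr τ]
      rw [intervalIntegral.integral_congr (fun τ _ => h3 τ)]
      simp
    rw [← hDtr]; exact hZ
  have hNval : trace (D * O) =
      ∫ τ in (0:ℝ)..1, trace (exp (τ • H lam) * B * exp ((1 - τ) • H lam) * O) := by
    have h1 : trace (D * O) = LO D := by rw [hLO]
    have h2 : LO D = ∫ τ in (0:ℝ)..1, LO (g τ) :=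
      (LO.intervalIntegral_comp_comm (hgcont.intervalIntegrable 0 1)).symm
    rw [h1, h2]
    congr 1
    funext τ
    rw [hLO]
  have hZne : trace (exp (H lam)) ≠ 0 := by
    exact trace_exp_ne_zero hd (hHerm lam)
  have hdiv := hN.div hZ' hZne
  rw [hNval] at hdiv
  have halg : ∀ (n a b z : ℂ), z ≠ 0 → n / z - b / z * (a / z) = (n * z - a * b) / z ^ 2 := by
    intro n a b z hz
    field_simp
  rw [halg _ _ _ _ hZne]
  exact hdiv

/-- Eq. (2) of the paper: the deviation between two normalized exponential expectation
values equals a double integral of the generalized correlation function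
`Corr_{ρ_λ}^τ(X−Y, O) = Tr[ρ_λ^τ (X−Y) ρ_λ^{1−τ} O] − Tr[ρ_λ(X−Y)]·Tr[ρ_λ O]`,
where `H_λ = Y + λ(X−Y)`, `Z_λ = Tr[exp H_λ]` and `ρ_λ = exp(H_λ)/Z_λ`. -/
theorem deviation_eq_integral_generalized_correlation (d : ℕ) (hd : 1 ≤ d)
    (X Y O : Matrix (Fin d) (Fin d) ℂ) (hX : X.IsHermitian) (hY : Y.IsHermitian) :
    trace (exp X * O) / trace (exp X) - trace (exp Y * O) / trace (exp Y) =
      ∫ lam in (0 : ℝ)..(1 : ℝ), ∫ τ in (0 : ℝ)..(1 : ℝ),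
        (trace (exp (τ • (Y + lam • (X - Y))) * (X - Y) *
              exp ((1 - τ) • (Y + lam • (X - Y))) * O) /
            trace (exp (Y + lam • (X - Y)))
          - trace (exp (Y + lam • (X - Y)) * (X - Y)) /
              trace (exp (Y + lam • (X - Y))) *
            (trace (exp (Y + lam • (X - Y)) * O) /
              trace (exp (Y + lam • (X - Y))))) := by
  haveI : Nonempty (Fin d) := ⟨⟨0, hd⟩⟩
  letI : SeminormedRing (Matrix (Fin d) (Fin d) ℂ) := Matrix.linftyOpSemiNormedRing
  letI : NormedRing (Matrix (Fin d) (Fin d) ℂ) := Matrix.linftyOpNormedRing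
  letI : NormedAlgebra ℝ (Matrix (Fin d) (Fin d) ℂ) := Matrix.linftyOpNormedAlgebra
  letI : NormedAlgebra ℂ (Matrix (Fin d) (Fin d) ℂ) := Matrix.linftyOpNormedAlgebra
  letI : NormOneClass (Matrix (Fin d) (Fin d) ℂ) := Matrix.linfty_opNormOneClass
  have hexpc : Continuous (exp : Matrix (Fin d) (Fin d) ℂ → Matrix (Fin d) (Fin d) ℂ) :=
    my_exp_continuous
  have hHerm : ∀ t : ℝ, (Y + t • (X - Y)).IsHermitian := by
    intro t
    have h1 : ((X - Y) : Matrix (Fin d) (Fin d) ℂ).IsHermitian := hX.sub hY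
    have h2 : (t • (X - Y) : Matrix (Fin d) (Fin d) ℂ).IsHermitian := by
      unfold Matrix.IsHermitian
      rw [conjTranspose_smul, h1.eq]
      norm_num
    exact hY.add h2
  have htrcont : Continuous (trace : Matrix (Fin d) (Fin d) ℂ → ℂ) := by
    have : Continuous fun M : Matrix (Fin d) (Fin d) ℂ => ∑ i : Fin d, M i i :=
      continuous_finset_sum _ fun i _ => (continuous_apply i).comp (continuous_apply i)
    exact this
  have hZne : ∀ t : ℝ, trace (exp (Y + t • (X - Y))) ≠ 0 :=
    fun t => trace_exp_ne_zero hd (hHerm t)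
  -- abbreviations
  set B := X - Y with hB
  set H : ℝ → Matrix (Fin d) (Fin d) ℂ := fun t => Y + t • B with hH
  set a : ℝ → ℝ → ℂ :=
    fun lam τ => trace (exp (τ • H lam) * B * exp ((1 - τ) • H lam) * O) with ha
  set w : ℝ → ℂ := fun lam =>
    (∫ τ in (0:ℝ)..1, a lam τ) / trace (exp (H lam))
      - trace (exp (H lam) * B) / trace (exp (H lam)) *
        (trace (exp (H lam) * O) / trace (exp (H lam))) with hw
  have hacont : Continuous (Function.uncurry a) := by
    apply htrcont.comp
    have hHc : Continuous fun p : ℝ × ℝ => H p.1 :=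
      continuous_const.add (continuous_fst.smul continuous_const)
    have e1 : Continuous fun p : ℝ × ℝ => exp (p.2 • H p.1) :=
      hexpc.comp (continuous_snd.smul hHc)
    have e2 : Continuous fun p : ℝ × ℝ => exp ((1 - p.2) • H p.1) :=
      hexpc.comp ((continuous_const.sub continuous_snd).smul hHc)
    exact ((e1.mul continuous_const).mul e2).mul continuous_const
  -- rewrite the inner integral
  have hinner : ∀ lam : ℝ,
      (∫ τ in (0:ℝ)..1, (a lam τ / trace (exp (H lam))
          - trace (exp (H lam) * B) / trace (exp (H lam)) *
            (trace (exp (H lam) * O) / trace (exp (H lam))))) = w lam := by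
    intro lam
    have h1 : IntervalIntegrable (fun τ => a lam τ / trace (exp (H lam)))
        MeasureTheory.volume 0 1 := by
      apply Continuous.intervalIntegrable
      exact (hacont.comp (continuous_const.prodMk continuous_id)).div_const _
    rw [intervalIntegral.integral_sub h1 intervalIntegrable_const,
      intervalIntegral.integral_div, intervalIntegral.integral_const]
    rw [hw]
    norm_num
  have hwcont : Continuous w := by
    have hZc : Continuous fun lam : ℝ => trace (exp (H lam)) :=
      htrcont.comp (hexpc.comp (continuous_const.add (continuous_id.smul continuous_const)))
    have hIc : Continuous fun lam : ℝ => ∫ τ in (0:ℝ)..1, a lam τ :=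
      intervalIntegral.continuous_parametric_intervalIntegral_of_continuous' hacont 0 1
    have hbc : Continuous fun lam : ℝ => trace (exp (H lam) * B) :=
      htrcont.comp ((hexpc.comp (continuous_const.add
        (continuous_id.smul continuous_const))).mul continuous_const)
    have hoc : Continuous fun lam : ℝ => trace (exp (H lam) * O) :=
      htrcont.comp ((hexpc.comp (continuous_const.add
        (continuous_id.smul continuous_const))).mul continuous_const)
    exact (hIc.div hZc hZne).sub ((hbc.div hZc hZne).mul (hoc.div hZc hZne))
  have hderiv : ∀ lam ∈ Set.uIcc (0:ℝ) 1,
      HasDerivAt (fun t : ℝ => trace (exp (H t) * O) / trace (exp (H t))) (w lam) lam :=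
    fun lam _ => key_deriv hd X Y O hHerm lam
  have hcalc := intervalIntegral.integral_eq_sub_of_hasDerivAt hderiv
    (hwcont.intervalIntegrable 0 1)
  calc trace (exp X * O) / trace (exp X) - trace (exp Y * O) / trace (exp Y)
      = trace (exp (H 1) * O) / trace (exp (H 1))
        - trace (exp (H 0) * O) / trace (exp (H 0)) := by
        rw [hH, hB]
        norm_num [add_sub_cancel]
    _ = ∫ lam in (0:ℝ)..1, w lam := hcalc.symm
    _ = _ := by
        rw [← intervalIntegral.integral_congr (fun lam _ => hinner lam)]
end

section
/- Let ρ₀ be a complex d×d density matrix with ρ₀² = ρ₀ (a pure state), let O be a Hermitian complex d×d matrix, let 0 ≤ p < 1, and set ρ = (1−p)·ρ₀ + (p/d)·I. Then |Tr[ρ²·O]/Tr[ρ²] − Tr[ρ₀·O]| ≤ 2p²‖O‖ / (d·(1−p)²), where Tr[ρ²] is a positive real number and ‖·‖ is the ℓ²→ℓ² operator norm. -/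
open scoped ComplexOrder

/-- The ℓ²→ℓ² operator norm of a square complex matrix. -/
noncomputable def opNorm {d : ℕ} (M : Matrix (Fin d) (Fin d) ℂ) : ℝ :=
  ‖Matrix.toEuclideanCLM (𝕜 := ℂ) M‖

open scoped Matrix
private lemma quad_bound {d : ℕ} (O : Matrix (Fin d) (Fin d) ℂ)
    (v : EuclideanSpace ℂ (Fin d)) :
    ‖inner (𝕜 := ℂ) v (Matrix.toEuclideanCLM (𝕜 := ℂ) O v)‖
      ≤ opNorm O * ‖v‖ ^ 2 := by
  calc ‖inner (𝕜 := ℂ) v (Matrix.toEuclideanCLM (𝕜 := ℂ) O v)‖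
      = ‖inner (𝕜 := ℂ) v (Matrix.toEuclideanCLM (𝕜 := ℂ) O v)‖ := rfl
    _ ≤ ‖v‖ * ‖Matrix.toEuclideanCLM (𝕜 := ℂ) O v‖ := norm_inner_le_norm _ _
    _ ≤ ‖v‖ * (opNorm O * ‖v‖) := by
        have := (Matrix.toEuclideanCLM (𝕜 := ℂ) O).le_opNorm v
        have h0 : (0:ℝ) ≤ ‖v‖ := norm_nonneg _
        unfold opNorm; nlinarith [this, h0]
    _ = opNorm O * ‖v‖ ^ 2 := by ring

private lemma trace_conj_bound {d : ℕ} (O A : Matrix (Fin d) (Fin d) ℂ) :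
    ‖Matrix.trace (Aᴴ * O * A)‖ ≤ opNorm O * (Matrix.trace (Aᴴ * A)).re := by
  obtain ⟨v, hv⟩ : ∃ v : Fin d → EuclideanSpace ℂ (Fin d), ∀ i j, v i j = A j i :=
    ⟨fun i => (WithLp.equiv 2 _).symm fun j => A j i, fun i j => rfl⟩
  have happ : ∀ (x : EuclideanSpace ℂ (Fin d)) (j : Fin d),
      (Matrix.toEuclideanCLM (𝕜 := ℂ) O x) j = ∑ k, O j k * x k := by
    intro x j
    have h := congrFun (Matrix.ofLp_toEuclideanCLM O x) j
    simpa [Matrix.toLin'_apply, Matrix.mulVec, dotProduct] using h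
  have hdiag : ∀ i, (Aᴴ * O * A) i i
      = inner (𝕜 := ℂ) (v i) (Matrix.toEuclideanCLM (𝕜 := ℂ) O (v i)) := by
    intro i
    rw [PiLp.inner_apply]
    simp only [RCLike.inner_apply, happ, hv, Matrix.mul_apply, Matrix.conjTranspose_apply,
      Finset.mul_sum, Finset.sum_mul]
    rw [Finset.sum_comm]
    exact Finset.sum_congr rfl fun j _ => Finset.sum_congr rfl fun k _ => by
      rw [show star (A j i) = (starRingEnd ℂ) (A j i) from rfl]; ring
  have hdiag2 : ∀ i, ((Aᴴ * A) i i).re = ‖v i‖ ^ 2 := by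
    intro i
    have h : (Aᴴ * A) i i = inner (𝕜 := ℂ) (v i) (v i) := by
      rw [PiLp.inner_apply]
      simp [RCLike.inner_apply, hv, Matrix.mul_apply, Matrix.conjTranspose_apply, Complex.conj_mul']
    rw [h, inner_self_eq_norm_sq_to_K]
    norm_cast
  calc ‖Matrix.trace (Aᴴ * O * A)‖
      ≤ ∑ i, ‖(Aᴴ * O * A) i i‖ := by
        unfold Matrix.trace
        simpa using norm_sum_le Finset.univ (fun i => (Aᴴ * O * A).diag i)
    _ ≤ ∑ i, opNorm O * ‖v i‖ ^ 2 := by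
        refine Finset.sum_le_sum fun i _ => ?_
        rw [hdiag i]
        exact quad_bound O (v i)
    _ = opNorm O * (Matrix.trace (Aᴴ * A)).re := by
        unfold Matrix.trace; rw [Complex.re_sum, Finset.mul_sum]
        exact Finset.sum_congr rfl fun i _ => by
          rw [show (Aᴴ * A).diag i = (Aᴴ * A) i i from rfl, hdiag2 i]

private lemma trace_O_bound {d : ℕ} (O : Matrix (Fin d) (Fin d) ℂ) :
    ‖Matrix.trace O‖ ≤ d * opNorm O := by
  have h := trace_conj_bound O (1 : Matrix (Fin d) (Fin d) ℂ)
  simpa [Matrix.trace_one, mul_comm] using h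

/-- The bound `|δ₁|` of Theorem 2: for a pure state `ρ₀` under global depolarizing noise
`ρ = (1−p)ρ₀ + (p/d)I`, the two-copy purified expectation value deviates from the noiseless one
by at most `2p²‖O‖/(d(1−p)²)`. -/
theorem fvp_depolarized_pure_state_bound (d : ℕ) (hd : 1 ≤ d)
    (ρ₀ O : Matrix (Fin d) (Fin d) ℂ)
    (hpsd : ρ₀.PosSemidef) (htr : Matrix.trace ρ₀ = 1) (hpure : ρ₀ ^ 2 = ρ₀)
    (hO : O.IsHermitian) (p : ℝ) (hp0 : 0 ≤ p) (hp1 : p < 1) :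
    let ρ : Matrix (Fin d) (Fin d) ℂ :=
      ((1 : ℝ) - p) • ρ₀ + (p / d : ℝ) • (1 : Matrix (Fin d) (Fin d) ℂ)
    (Matrix.trace (ρ ^ 2)).im = 0 ∧ 0 < (Matrix.trace (ρ ^ 2)).re ∧
      ‖Matrix.trace (ρ ^ 2 * O) / Matrix.trace (ρ ^ 2) - Matrix.trace (ρ₀ * O)‖
        ≤ 2 * p ^ 2 * opNorm O / (d * (1 - p) ^ 2) := by
  intro ρ
  have hρ₀H : ρ₀ᴴ = ρ₀ := hpsd.isHermitian
  have hmulρ₀ : ρ₀ * ρ₀ = ρ₀ := by rw [← pow_two, hpure]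
  have hd0 : (0:ℝ) < d := by exact_mod_cast Nat.lt_of_lt_of_le Nat.zero_lt_one hd
  set a : ℝ := 1 - p with ha
  set b : ℝ := p / d with hb
  have ha0 : 0 < a := by simp only [ha]; linarith
  have hb0 : 0 ≤ b := by positivity
  have hρdef : ρ = a • ρ₀ + b • (1 : Matrix (Fin d) (Fin d) ℂ) := rfl
  set c : ℝ := a ^ 2 + 2 * (a * b) with hc
  have hc0 : 0 < c := by positivity
  have hρsq : ρ ^ 2 = c • ρ₀ + (b ^ 2) • (1 : Matrix (Fin d) (Fin d) ℂ) := by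
    rw [hρdef, pow_two]
    simp only [add_mul, mul_add, smul_mul_assoc, mul_smul_comm, smul_smul, mul_one, one_mul,
      hmulρ₀, hc]
    module
  set T : ℝ := c + b ^ 2 * d with hTdef
  have hTpos : 0 < T := by positivity
  have hT : Matrix.trace (ρ ^ 2) = (T : ℂ) := by
    rw [hρsq, Matrix.trace_add, Matrix.trace_smul, Matrix.trace_smul, htr, Matrix.trace_one]
    simp only [Complex.real_smul, hTdef, Fintype.card_fin]
    push_cast
    ring
  refine ⟨by rw [hT]; simp, by rw [hT]; simpa using hTpos, ?_⟩
  have hTO : Matrix.trace (ρ ^ 2 * O)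
      = (c : ℂ) * Matrix.trace (ρ₀ * O) + ((b ^ 2 : ℝ) : ℂ) * Matrix.trace O := by
    rw [hρsq, Matrix.add_mul, Matrix.smul_mul, Matrix.smul_mul, Matrix.one_mul,
      Matrix.trace_add, Matrix.trace_smul, Matrix.trace_smul]
    simp [Complex.real_smul]
  have ht : ‖Matrix.trace (ρ₀ * O)‖ ≤ opNorm O := by
    have h := trace_conj_bound O ρ₀
    rw [hρ₀H] at h
    have e1 : Matrix.trace (ρ₀ * O * ρ₀) = Matrix.trace (ρ₀ * O) := by
      rw [Matrix.trace_mul_comm, ← Matrix.mul_assoc, hmulρ₀]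
    rw [e1, hmulρ₀, htr] at h
    simpa using h
  have hs : ‖Matrix.trace O‖ ≤ d * opNorm O := trace_O_bound O
  have hTne : (T : ℂ) ≠ 0 := by exact_mod_cast hTpos.ne'
  have key : Matrix.trace (ρ ^ 2 * O) / Matrix.trace (ρ ^ 2) - Matrix.trace (ρ₀ * O)
      = ((b ^ 2 : ℝ) : ℂ) * (Matrix.trace O - (d : ℂ) * Matrix.trace (ρ₀ * O)) / (T : ℂ) := by
    rw [hTO, hT]
    field_simp
    push_cast [hTdef]
    ring
  rw [key, norm_div, norm_mul, Complex.norm_of_nonneg (by positivity : (0:ℝ) ≤ b ^ 2),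
    Complex.norm_of_nonneg hTpos.le]
  have hnum : ‖Matrix.trace O - (d : ℂ) * Matrix.trace (ρ₀ * O)‖
      ≤ 2 * d * opNorm O := by
    calc ‖Matrix.trace O - (d : ℂ) * Matrix.trace (ρ₀ * O)‖
        ≤ ‖Matrix.trace O‖ + ‖(d : ℂ) * Matrix.trace (ρ₀ * O)‖ := by
          simpa using
            norm_sub_le (Matrix.trace O) ((d : ℂ) * Matrix.trace (ρ₀ * O))
      _ ≤ d * opNorm O + d * ‖Matrix.trace (ρ₀ * O)‖ := by
          rw [norm_mul, RCLike.norm_natCast]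
          exact add_le_add hs le_rfl
      _ ≤ d * opNorm O + d * opNorm O := by
          have := mul_le_mul_of_nonneg_left ht hd0.le
          linarith
      _ = 2 * d * opNorm O := by ring
  have hO0 : 0 ≤ opNorm O := norm_nonneg _
  have hTa : a ^ 2 ≤ T := by nlinarith
  calc b ^ 2 * ‖Matrix.trace O - (d : ℂ) * Matrix.trace (ρ₀ * O)‖ / T
      ≤ b ^ 2 * (2 * d * opNorm O) / T := by
        gcongr
    _ ≤ b ^ 2 * (2 * d * opNorm O) / a ^ 2 := by
        gcongr
    _ = 2 * p ^ 2 * opNorm O / (d * a ^ 2) := by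
        rw [hb]
        field_simp
end

section
/- Let H be a Hermitian complex d×d matrix with d ≥ 2, let β > 0 and N > 0 be real numbers, and let n ≥ 2 be a natural number. Define the free energy density f_β = −(1/(Nβ))·log(Tr[exp(−βH)]) and the Gibbs state ρ_β(H) = exp(−βH)/Tr[exp(−βH)]. Then: (i) (Tr[ρ_β(H)ⁿ])^{−2} = exp(2nβN·(f_{nβ} − f_β)); (ii) f_{nβ} > f_β, equivalently Tr[exp(−nβH)] < (Tr[exp(−βH)])ⁿ. In particular Tr[ρ_β(H)ⁿ] < 1. -/
open Matrix NormedSpace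

/-- The Gibbs state `ρ_β(H) = exp(-βH)/Tr[exp(-βH)]`. -/
noncomputable def gibbs {d : ℕ} (β : ℝ) (H : Matrix (Fin d) (Fin d) ℂ) :
    Matrix (Fin d) (Fin d) ℂ :=
  (Matrix.trace (NormedSpace.exp ((-β : ℂ) • H)))⁻¹ • NormedSpace.exp ((-β : ℂ) • H)

lemma trace_exp_eq {d : ℕ} (H : Matrix (Fin d) (Fin d) ℂ) (hH : H.IsHermitian) (t : ℝ) :
    Matrix.trace (exp ((-t : ℂ) • H)) = ∑ i, (Real.exp (-t * hH.eigenvalues i) : ℂ) := by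
  set U : Matrix (Fin d) (Fin d) ℂ := (hH.eigenvectorUnitary : Matrix (Fin d) (Fin d) ℂ)
  have hUU : U * star U = 1 := Unitary.coe_mul_star_self hH.eigenvectorUnitary
  have hU : IsUnit U := ⟨Unitary.toUnits hH.eigenvectorUnitary, rfl⟩
  have hUinv : U⁻¹ = star U := Matrix.inv_eq_right_inv hUU
  have hspec := hH.spectral_theorem
  calc Matrix.trace (exp ((-t : ℂ) • H))
      = Matrix.trace (exp (U * ((-t : ℂ) • diagonal (RCLike.ofReal ∘ hH.eigenvalues)) * U⁻¹)) := by
        rw [hUinv]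
        have h1 : (-t : ℂ) • H =
            U * ((-t : ℂ) • diagonal (RCLike.ofReal ∘ hH.eigenvalues)) * star U := by
          rw [Matrix.mul_smul, Matrix.smul_mul]
          exact congrArg (fun M => (-t : ℂ) • M) hspec
        rw [h1]
    _ = Matrix.trace (U * exp ((-t : ℂ) • diagonal (RCLike.ofReal ∘ hH.eigenvalues)) * U⁻¹) := by
        rw [Matrix.exp_conj U _ hU]
    _ = Matrix.trace (exp ((-t : ℂ) • diagonal (RCLike.ofReal ∘ hH.eigenvalues))) := by
        rw [Matrix.trace_mul_cycle, hUinv, Unitary.coe_star_mul_self, Matrix.one_mul]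
    _ = ∑ i, (Real.exp (-t * hH.eigenvalues i) : ℂ) := by
        rw [← Matrix.diagonal_smul, Matrix.exp_diagonal, Matrix.trace_diagonal]
        refine Finset.sum_congr rfl fun i _ => ?_
        rw [Pi.coe_exp, ← Complex.exp_eq_exp_ℂ]
        simp only [Pi.smul_apply, Function.comp_apply, smul_eq_mul]
        rw [show ((-t : ℂ)) * (RCLike.ofReal (hH.eigenvalues i)) =
          ((-t * hH.eigenvalues i : ℝ) : ℂ) by simp [RCLike.ofReal_alg], Complex.ofReal_exp]

/-- The measurement-cost formula for Fully Virtual Purification of Gibbs states: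
`(Tr[ρ_β(H)ⁿ])⁻² = exp(2nβN(f_{nβ} − f_β))` with `f_β = −(1/(Nβ))log Tr[exp(−βH)]`,
together with the strict positivity of the free energy density difference and the
strict inequality `Tr[ρ_β(H)ⁿ] < 1`. -/
theorem fvp_gibbs_measurement_cost (d : ℕ) (hd : 2 ≤ d)
    (H : Matrix (Fin d) (Fin d) ℂ) (hH : H.IsHermitian)
    (β N : ℝ) (hβ : 0 < β) (hN : 0 < N) (n : ℕ) (hn : 2 ≤ n) :
    let f : ℝ → ℝ := fun β' =>
      -(1 / (N * β')) * Real.log ((Matrix.trace (exp ((-β' : ℂ) • H))).re)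
    ((Matrix.trace (gibbs β H ^ n)).re ^ 2)⁻¹ = Real.exp (2 * n * β * N * (f (n * β) - f β)) ∧
      f (n * β) > f β ∧
      (Matrix.trace (exp ((-(n * β) : ℂ) • H))).re <
        ((Matrix.trace (exp ((-β : ℂ) • H))).re) ^ n ∧
      (Matrix.trace (gibbs β H ^ n)).re < 1 := by
  intro f
  have hd0 : 0 < d := by omega
  haveI : Nonempty (Fin d) := ⟨⟨0, hd0⟩⟩
  set ev := hH.eigenvalues with hev
  set S1 : ℝ := ∑ i, Real.exp (-β * ev i) with hS1
  set Sn : ℝ := ∑ i, Real.exp (-((n : ℝ) * β) * ev i) with hSn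
  have hS1pos : 0 < S1 :=
    Finset.sum_pos (fun i _ => Real.exp_pos _) Finset.univ_nonempty
  have hSnpos : 0 < Sn :=
    Finset.sum_pos (fun i _ => Real.exp_pos _) Finset.univ_nonempty
  have hn0 : (0 : ℝ) < n := by positivity
  -- Sn as sum of n-th powers
  have hSn_pow : Sn = ∑ i, (Real.exp (-β * ev i)) ^ n := by
    refine Finset.sum_congr rfl fun i _ => ?_
    rw [show -((n : ℝ) * β) * ev i = (n : ℕ) * (-β * ev i) by push_cast; ring,
      Real.exp_nat_mul]
  -- strict inequality Sn < S1 ^ n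
  have hlt : Sn < S1 ^ n := by
    rw [hSn_pow]
    have hterm : ∀ i : Fin d, (Real.exp (-β * ev i)) ^ n <
        Real.exp (-β * ev i) * S1 ^ (n - 1) := by
      intro i
      have hiS : Real.exp (-β * ev i) < S1 := by
        rw [hS1]
        obtain ⟨j, hj⟩ := Fintype.exists_ne_of_one_lt_card (by simpa using by omega : 1 < Fintype.card (Fin d)) i
        exact Finset.single_lt_sum (f := fun k => Real.exp (-β * ev k)) hj (Finset.mem_univ i) (Finset.mem_univ j)
          (Real.exp_pos _) (fun k _ _ => (Real.exp_pos _).le)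
      have h1 : (Real.exp (-β * ev i)) ^ (n - 1) < S1 ^ (n - 1) :=
        pow_lt_pow_left₀ hiS (Real.exp_pos _).le (by omega)
      calc (Real.exp (-β * ev i)) ^ n
          = Real.exp (-β * ev i) * (Real.exp (-β * ev i)) ^ (n - 1) := by
            rw [← pow_succ']; congr 1; omega
        _ < Real.exp (-β * ev i) * S1 ^ (n - 1) := by
            exact mul_lt_mul_of_pos_left h1 (Real.exp_pos _)
    calc (∑ i, (Real.exp (-β * ev i)) ^ n)
        < ∑ i, Real.exp (-β * ev i) * S1 ^ (n - 1) :=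
          Finset.sum_lt_sum_of_nonempty Finset.univ_nonempty fun i _ => hterm i
      _ = S1 * S1 ^ (n - 1) := by rw [← Finset.sum_mul]
      _ = S1 ^ n := by rw [← pow_succ']; congr 1; omega
  -- traces
  have hT1 : Matrix.trace (exp ((-β : ℂ) • H)) = (S1 : ℂ) := by
    rw [trace_exp_eq H hH β]; push_cast [hS1]; rfl
  have hTn := trace_exp_eq H hH ((n : ℝ) * β)
  rw [show (∑ i, ((Real.exp (-((n : ℝ) * β) * hH.eigenvalues i) : ℝ) : ℂ))
      = ((Sn : ℝ) : ℂ) by rw [hSn]; push_cast; rfl] at hTn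
  have hTn' : Matrix.trace (exp ((-(n * β) : ℂ) • H)) = (Sn : ℂ) := by
    rw [show ((-(n * β) : ℂ)) = -((((n : ℝ) * β : ℝ)) : ℂ) by push_cast; ring]
    exact hTn
  -- trace of gibbs power
  have hρ : Matrix.trace (gibbs β H ^ n) = ((Sn / S1 ^ n : ℝ) : ℂ) := by
    unfold gibbs
    rw [smul_pow, Matrix.trace_smul, ← Matrix.exp_nsmul,
      show (n • ((-β : ℂ) • H)) = (-((((n : ℝ) * β : ℝ)) : ℂ)) • H by
        rw [← Nat.cast_smul_eq_nsmul ℂ, smul_smul]; congr 1; push_cast; ring,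
      hTn, hT1, smul_eq_mul]
    push_cast
    rw [inv_pow]
    field_simp
  have hρre : (Matrix.trace (gibbs β H ^ n)).re = Sn / S1 ^ n := by
    rw [hρ, Complex.ofReal_re]
  -- f values
  have hfβ : f β = -(1 / (N * β)) * Real.log S1 := by
    simp only [f, hT1, Complex.ofReal_re]
  have hfnβ : f ((n : ℝ) * β) = -(1 / (N * ((n : ℝ) * β))) * Real.log Sn := by
    simp only [f, hTn, Complex.ofReal_re]
  have hN' : N ≠ 0 := ne_of_gt hN
  have hβ' : β ≠ 0 := ne_of_gt hβ
  have hnr : (n : ℝ) ≠ 0 := ne_of_gt hn0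
  have hlog : Real.log Sn < n * Real.log S1 := by
    have := Real.log_lt_log hSnpos hlt
    rwa [Real.log_pow] at this
  have hdiff : 2 * n * β * N * (f ((n : ℝ) * β) - f β)
      = 2 * ((n : ℝ) * Real.log S1 - Real.log Sn) := by
    rw [hfβ, hfnβ]; field_simp; ring
  refine ⟨?_, ?_, ?_, ?_⟩
  · rw [hρre, hdiff]
    have hL : Real.log ((S1 ^ n / Sn) ^ 2) = 2 * ((n : ℝ) * Real.log S1 - Real.log Sn) := by
      rw [Real.log_pow, Real.log_div (by positivity) (ne_of_gt hSnpos), Real.log_pow]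
      push_cast; ring
    rw [← hL, Real.exp_log (by positivity), ← inv_pow, inv_div]
  · have : 0 < f ((n : ℝ) * β) - f β := by
      have h2 : 0 < 2 * (n : ℝ) * β * N := by positivity
      nlinarith [hdiff, hlog]
    linarith
  · rw [hTn', hT1]
    simpa using hlt
  · rw [hρre]
    rw [div_lt_one (by positivity)]
    exact hlt
end

section
/- Let ι be a nonempty finite type, ρ a complex ι×ι matrix, P a complex ι×ι matrix, and n ≥ 1 a natural number. On the index type (Fin n → ι) define: the n-fold tensor power T by T_{f,g} = ∏_{k : Fin n} ρ_{f(k), g(k)}; the cyclic-shift (derangement) matrix 𝕊 by 𝕊_{f,g} = 1 if g(k) = f(k+1) for all k ∈ Fin n (addition mod n) and 𝕊_{f,g} = 0 otherwise; and the observable on the first copy Q by Q_{f,g} = P_{f(0), g(0)} · ∏_{k ≠ 0} (1 if f(k) = g(k) else 0). Then Tr[T · 𝕊 · Q] = Tr[ρⁿ · P]. -/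
open Matrix

section FVPaux
variable {ι : Type*} [Fintype ι] [DecidableEq ι]

private def FVP.chain (ρ : Matrix ι ι ℂ) {m : ℕ} (w : Fin (m+1) → ι) : ℂ :=
  ∏ j : Fin m, ρ (w j.castSucc) (w j.succ)

private lemma FVP.chain_snoc (ρ : Matrix ι ι ℂ) {m : ℕ} (w : Fin (m+1) → ι) (z : ι) :
    FVP.chain ρ (Fin.snoc w z) = FVP.chain ρ w * ρ (w (Fin.last m)) z := by
  rw [FVP.chain, Fin.prod_univ_castSucc]
  congr 1
  · exact Finset.prod_congr rfl fun j _ => by simp [Fin.succ_castSucc, -Fin.castSucc_succ]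
  · simp

private lemma FVP.path_sum (ρ : Matrix ι ι ℂ) (m : ℕ) (x y : ι) :
    (ρ ^ (m+1)) x y =
      ∑ v : Fin m → ι, FVP.chain ρ (Fin.cons x v) *
        ρ ((Fin.cons x v : Fin (m+1) → ι) (Fin.last m)) y := by
  induction m generalizing y with
  | zero => simp [FVP.chain]
  | succ m ih =>
    rw [pow_succ, Matrix.mul_apply]
    have e : ∀ z, (ρ ^ (m+1)) x z * ρ z y =
        ∑ v : Fin m → ι,
          (FVP.chain ρ (Fin.cons x v) * ρ ((Fin.cons x v : Fin (m+1) → ι) (Fin.last m)) z)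
            * ρ z y := by
      intro z; rw [ih z, Finset.sum_mul]
    rw [Finset.sum_congr rfl fun z _ => e z, Finset.sum_comm]
    rw [← ((Fin.snocEquiv (fun _ : Fin (m+1) => ι)).sum_comp
        (fun v => FVP.chain ρ (Fin.cons x v) *
          ρ ((Fin.cons x v : Fin (m+1+1) → ι) (Fin.last (m+1))) y))]
    rw [Fintype.sum_prod_type, Finset.sum_comm]
    refine Finset.sum_congr rfl fun z _ => Finset.sum_congr rfl fun v _ => ?_
    show _ = FVP.chain ρ (Fin.cons x (Fin.snoc v z)) *
        ρ ((Fin.cons x (Fin.snoc v z) : Fin (m+1+1) → ι) (Fin.last (m+1))) y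
    rw [show (Fin.cons x (Fin.snoc v z) : Fin (m+1+1) → ι) = Fin.snoc (Fin.cons x v) z from
      Fin.cons_snoc_eq_snoc_cons x v z]
    rw [FVP.chain_snoc]
    simp [mul_assoc]

private lemma FVP.trace_pow_mul (ρ P : Matrix ι ι ℂ) (m : ℕ) :
    Matrix.trace (ρ ^ (m+1) * P) =
      ∑ w : Fin (m+1) → ι, ∑ y : ι,
        FVP.chain ρ w * ρ (w (Fin.last m)) y * P y (w 0) := by
  have h1 : Matrix.trace (ρ ^ (m+1) * P) = ∑ x : ι, ∑ y : ι, (ρ ^ (m+1)) x y * P y x := by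
    simp [Matrix.trace, Matrix.mul_apply, Matrix.diag]
  rw [h1]
  rw [← ((Fin.consEquiv (fun _ : Fin (m+1) => ι)).sum_comp
      (fun w => ∑ y : ι, FVP.chain ρ w * ρ (w (Fin.last m)) y * P y (w 0)))]
  rw [Fintype.sum_prod_type]
  refine Finset.sum_congr rfl fun x _ => ?_
  rw [Finset.sum_comm]
  refine Finset.sum_congr rfl fun y _ => ?_
  rw [FVP.path_sum ρ m x y, Finset.sum_mul]
  refine Finset.sum_congr rfl fun v _ => ?_
  simp [Fin.consEquiv]

private lemma FVP.sum_ite_collapse {α : Type*} [Fintype α] [DecidableEq α]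
    (t : α) (F : α → ℂ) (p : α → Prop) [DecidablePred p] (hp : ∀ a, p a ↔ a = t) :
    ∑ a : α, (if p a then (1:ℂ) else 0) * F a = F t := by
  rw [Finset.sum_eq_single t]
  · rw [if_pos ((hp t).2 rfl), one_mul]
  · intro a _ ha
    rw [if_neg (fun h => ha ((hp a).1 h)), zero_mul]
  · simp

private lemma FVP.sum_delta {κ : Type*} [Fintype κ] [DecidableEq κ] (i0 : κ) (c : κ → ι)
    (X : (κ → ι) → ℂ) :
    ∑ g : κ → ι, (∏ j ∈ Finset.univ.erase i0, if g j = c j then (1:ℂ) else 0) * X g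
      = ∑ y : ι, X (Function.update c i0 y) := by
  have key : ∀ g : κ → ι,
      (∏ j ∈ Finset.univ.erase i0, if g j = c j then (1:ℂ) else 0) * X g
        = ∑ y : ι, if g = Function.update c i0 y then X g else 0 := by
    intro g
    rw [Finset.prod_boole, boole_mul]
    by_cases h : ∀ j ∈ Finset.univ.erase i0, g j = c j
    · rw [if_pos h]
      have hg : g = Function.update c i0 (g i0) := by
        funext j
        by_cases hj : j = i0
        · subst hj; simp
        · rw [Function.update_of_ne hj]
          exact h j (Finset.mem_erase.2 ⟨hj, Finset.mem_univ j⟩)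
      rw [Finset.sum_eq_single (g i0)]
      · rw [if_pos hg]
      · intro y _ hy
        rw [if_neg]
        intro hgy
        exact hy (by rw [hgy]; simp)
      · simp
    · rw [if_neg h]
      refine (Finset.sum_eq_zero fun y _ => ?_).symm
      rw [if_neg]
      intro hgy
      exact h fun j hj => by
        rw [hgy, Function.update_of_ne (Finset.mem_erase.1 hj).1]
  rw [Finset.sum_congr rfl fun g _ => key g, Finset.sum_comm]
  refine Finset.sum_congr rfl fun y _ => ?_
  rw [Finset.sum_ite_eq' Finset.univ (Function.update c i0 y) X]
  simp

private lemma FVP.neg_one_last (m : ℕ) : (-1 : Fin (m+1)) = Fin.last m := by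
  ext
  rcases m with _|m
  · simp
  · simp [Fin.neg_def, Fin.last, Fin.val_one']

private lemma FVP.castSucc_add_one {m : ℕ} (j : Fin m) : j.castSucc + 1 = j.succ := by
  ext
  simp [Fin.val_add_one_of_lt]

end FVPaux

/-- The identity `Tr[(ρ^{⊗n})·𝕊·(P ⊗ I^{⊗(n−1)})] = Tr[ρⁿ·P]` underlying Fully Virtual
Purification, with the `n`-fold tensor power, the cyclic-shift (derangement) operator, and
the observable on the first copy written as explicit matrices on the index type `Fin n → ι`. -/
theorem fvp_cyclic_shift_trace_identity {ι : Type*} [Fintype ι] [DecidableEq ι] [Nonempty ι]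
    (ρ P : Matrix ι ι ℂ) (n : ℕ) (hn : 0 < n) :
    Matrix.trace
      ((Matrix.of fun f g : Fin n → ι => ∏ k, ρ (f k) (g k)) *
        (Matrix.of fun f g : Fin n → ι =>
          if ∀ k, g k = f (k + ⟨1 % n, Nat.mod_lt 1 hn⟩) then (1 : ℂ) else 0) *
        (Matrix.of fun f g : Fin n → ι =>
          P (f ⟨0, hn⟩) (g ⟨0, hn⟩) *
            ∏ k ∈ Finset.univ.erase (⟨0, hn⟩ : Fin n),
              if f k = g k then (1 : ℂ) else 0))
      = Matrix.trace (ρ ^ n * P) := by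
  obtain ⟨m, rfl⟩ : ∃ m, n = m + 1 := ⟨n - 1, (Nat.succ_pred_eq_of_pos hn).symm⟩
  have h1 : (⟨1 % (m+1), Nat.mod_lt 1 hn⟩ : Fin (m+1)) = 1 := by
    ext; simp [Fin.val_one']
  have h0 : (⟨0, hn⟩ : Fin (m+1)) = 0 := rfl
  rw [h1, h0]
  -- Step A : expand the trace of the triple product
  have stepA : Matrix.trace
      ((Matrix.of fun f g : Fin (m+1) → ι => ∏ k, ρ (f k) (g k)) *
        (Matrix.of fun f g : Fin (m+1) → ι =>
          if ∀ k, g k = f (k + 1) then (1 : ℂ) else 0) *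
        (Matrix.of fun f g : Fin (m+1) → ι =>
          P (f 0) (g 0) *
            ∏ k ∈ Finset.univ.erase (0 : Fin (m+1)),
              if f k = g k then (1 : ℂ) else 0))
      = ∑ f : Fin (m+1) → ι, ∑ g : Fin (m+1) → ι, ∑ h : Fin (m+1) → ι,
          (∏ k, ρ (f k) (g k)) *
            (if ∀ k, h k = g (k + 1) then (1 : ℂ) else 0) *
            (P (h 0) (f 0) *
              ∏ k ∈ Finset.univ.erase (0 : Fin (m+1)),
                if h k = f k then (1 : ℂ) else 0) := by
    simp only [Matrix.trace, Matrix.diag, Matrix.mul_apply, Matrix.of_apply, Finset.sum_mul]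
    exact Finset.sum_congr rfl fun f _ => Finset.sum_comm
  rw [stepA]
  -- Step B : collapse the sum over h using the shift delta
  have stepB : ∀ f : Fin (m+1) → ι, ∀ g : Fin (m+1) → ι,
      (∑ h : Fin (m+1) → ι,
        (∏ k, ρ (f k) (g k)) *
          (if ∀ k, h k = g (k + 1) then (1 : ℂ) else 0) *
          (P (h 0) (f 0) *
            ∏ k ∈ Finset.univ.erase (0 : Fin (m+1)),
              if h k = f k then (1 : ℂ) else 0))
      = (∏ k, ρ (f k) (g k)) *
          (P (g 1) (f 0) *
            ∏ k ∈ Finset.univ.erase (0 : Fin (m+1)),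
              if g (k + 1) = f k then (1 : ℂ) else 0) := by
    intro f g
    have e : ∀ h : Fin (m+1) → ι,
        (∏ k, ρ (f k) (g k)) *
          (if ∀ k, h k = g (k + 1) then (1 : ℂ) else 0) *
          (P (h 0) (f 0) *
            ∏ k ∈ Finset.univ.erase (0 : Fin (m+1)),
              if h k = f k then (1 : ℂ) else 0)
        = (if ∀ k, h k = g (k + 1) then (1 : ℂ) else 0) *
            ((∏ k, ρ (f k) (g k)) *
              (P (h 0) (f 0) *
                ∏ k ∈ Finset.univ.erase (0 : Fin (m+1)),
                  if h k = f k then (1 : ℂ) else 0)) := by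
      intro h; ring
    rw [Finset.sum_congr rfl fun h _ => e h]
    rw [FVP.sum_ite_collapse (fun k => g (k + 1))
      (fun h => (∏ k, ρ (f k) (g k)) *
        (P (h 0) (f 0) *
          ∏ k ∈ Finset.univ.erase (0 : Fin (m+1)), if h k = f k then (1 : ℂ) else 0))
      (fun h => ∀ k, h k = g (k + 1)) (fun h => funext_iff.symm)]
    simp [zero_add]
  rw [Finset.sum_congr rfl fun f _ => Finset.sum_congr rfl fun g _ => stepB f g]
  -- Step C : reindex the delta product and collapse the sum over g
  have shift_prod : ∀ f g : Fin (m+1) → ι,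
      (∏ k ∈ Finset.univ.erase (0 : Fin (m+1)), if g (k + 1) = f k then (1:ℂ) else 0)
        = ∏ j ∈ Finset.univ.erase (1 : Fin (m+1)), if g j = f (j - 1) then (1:ℂ) else 0 := by
    intro f g
    refine Finset.prod_bij' (fun k _ => k + 1) (fun j _ => j - 1) ?_ ?_ ?_ ?_ ?_
    · intro k hk
      simp only [Finset.mem_erase, Finset.mem_univ, and_true] at hk ⊢
      intro hc
      exact hk (add_right_cancel (b := (1 : Fin (m+1))) (by rw [hc, zero_add]))
    · intro j hj
      simp only [Finset.mem_erase, Finset.mem_univ, and_true] at hj ⊢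
      intro hc
      exact hj (by rw [← sub_eq_zero]; exact hc)
    · intro k _; abel
    · intro j _; abel
    · intro k _
      rw [add_sub_cancel_right]
  have stepC : ∀ f : Fin (m+1) → ι,
      (∑ g : Fin (m+1) → ι,
        (∏ k, ρ (f k) (g k)) *
          (P (g 1) (f 0) *
            ∏ k ∈ Finset.univ.erase (0 : Fin (m+1)),
              if g (k + 1) = f k then (1 : ℂ) else 0))
      = ∑ y : ι,
          (∏ k, ρ (f k) (Function.update (fun j : Fin (m+1) => f (j - 1)) 1 y k))
            * P y (f 0) := by
    intro f
    have e : ∀ g : Fin (m+1) → ι,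
        (∏ k, ρ (f k) (g k)) *
          (P (g 1) (f 0) *
            ∏ k ∈ Finset.univ.erase (0 : Fin (m+1)),
              if g (k + 1) = f k then (1 : ℂ) else 0)
        = (∏ j ∈ Finset.univ.erase (1 : Fin (m+1)),
            if g j = (fun j : Fin (m+1) => f (j - 1)) j then (1:ℂ) else 0) *
            ((∏ k, ρ (f k) (g k)) * P (g 1) (f 0)) := by
      intro g
      rw [shift_prod f g]
      ring
    rw [Finset.sum_congr rfl fun g _ => e g]
    rw [FVP.sum_delta (1 : Fin (m+1)) (fun j : Fin (m+1) => f (j - 1))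
      (fun g => (∏ k, ρ (f k) (g k)) * P (g 1) (f 0))]
    refine Finset.sum_congr rfl fun y _ => ?_
    rw [Function.update_self]
  rw [Finset.sum_congr rfl fun f _ => stepC f]
  -- Step D : reindex f ↦ (fun k => w (-k))
  have inv : Function.Involutive (fun (w : Fin (m+1) → ι) => fun k => w (-k)) :=
    fun w => funext fun k => by simp
  rw [← Equiv.sum_comp (Function.Involutive.toPerm _ inv) (fun f : Fin (m+1) → ι => ∑ y : ι,
      (∏ k, ρ (f k) (Function.update (fun j : Fin (m+1) => f (j - 1)) 1 y k)) * P y (f 0))]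
  rw [FVP.trace_pow_mul ρ P m]
  refine Finset.sum_congr rfl fun w _ => ?_
  simp only [Function.Involutive.coe_toPerm]
  refine Finset.sum_congr rfl fun y _ => ?_
  -- Step E : identify the remaining product with the chain
  have hsplit : (∏ k, ρ (w (-k))
        (Function.update (fun j : Fin (m+1) => w (-(j - 1))) 1 y k))
      = ρ (w (-1)) y *
          ∏ k ∈ Finset.univ.erase (1 : Fin (m+1)), ρ (w (-k)) (w (-(k - 1))) := by
    rw [← Finset.mul_prod_erase Finset.univ _ (Finset.mem_univ (1 : Fin (m+1)))]
    congr 1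
    · rw [Function.update_self]
    · refine Finset.prod_congr rfl fun k hk => ?_
      rw [Function.update_of_ne (Finset.mem_erase.1 hk).1]
  have hchain : (∏ k ∈ Finset.univ.erase (1 : Fin (m+1)), ρ (w (-k)) (w (-(k - 1))))
      = FVP.chain ρ w := by
    rw [FVP.chain]
    refine Finset.prod_bij'
      (fun k hk => (-k).castPred (fun hc => (Finset.mem_erase.1 hk).1
        (by rw [← neg_neg k, hc, ← FVP.neg_one_last, neg_neg])))
      (fun j _ => -(j.castSucc)) ?_ ?_ ?_ ?_ ?_
    · intro k _; exact Finset.mem_univ _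
    · intro j _
      refine Finset.mem_erase.2 ⟨?_, Finset.mem_univ _⟩
      intro hc
      have : j.castSucc = Fin.last m := by
        rw [← FVP.neg_one_last, ← hc, neg_neg]
      exact (Fin.castSucc_lt_last j).ne this
    · intro k _
      simp only [Fin.castSucc_castPred, neg_neg]
    · intro j _
      apply Fin.castSucc_injective
      simp only [Fin.castSucc_castPred, neg_neg]
    · intro k hk
      have harith : -(k - 1) = -k + 1 := by abel
      simp only [← FVP.castSucc_add_one, Fin.castSucc_castPred, harith]
  rw [hsplit, hchain, FVP.neg_one_last, neg_zero]
  ring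
end

section
/- Let a, b be nonempty finite types and let ρ be a complex (a×b)×(a×b) matrix. Define the reduced matrix ρ^{A} on a by ρ^{A}_{i,i'} = Σ_j ρ_{(i,j),(i',j)}. On the two-copy index type (a×b)×(a×b) (i.e., indices are pairs (x₁,x₂) with xᵢ ∈ a×b), define: the tensor product T by T_{(x₁,x₂),(y₁,y₂)} = ρ_{x₁,y₁}·ρ_{x₂,y₂}; the partial swap V which exchanges the a-components of the two copies, V_{((i₁,j₁),(i₂,j₂)),((k₁,l₁),(k₂,l₂))} = 1 if k₁ = i₂, k₂ = i₁, l₁ = j₁, l₂ = j₂, and 0 otherwise; and, for a complex a×a matrix P, the observable Q acting as P on the a-component of the first copy and as the identity elsewhere, Q_{((i₁,j₁),(i₂,j₂)),((k₁,l₁),(k₂,l₂))} = P_{i₁,k₁} if j₁ = l₁, i₂ = k₂, j₂ = l₂, and 0 otherwise. Then Tr[T · V · Q] = Tr[(ρ^{A})² · P]. -/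
/-!
Write a two-copy index as `((i, j), (i', j'))`. The Kronecker deltas of the partial swap and of
the identity factors of `P ⊗ 1 ⊗ 1` collapse `Tr[(ρ ⊗ σ) · V · Q]` to
`∑ ρ (i, j) (i', j) * σ (i', j') (k, j') * P k i`. Since the `b`-indices `j` and `j'` each occur
in only one factor, summing them out produces the partial traces, leaving `Tr[ρ^A σ^A P]`.
-/

open Matrix
open scoped Kronecker

namespace Matrix

variable {a b R : Type*} [Fintype a] [Fintype b] [DecidableEq a] [DecidableEq b]

def partialTraceRight [AddCommMonoid R] (ρ : Matrix (a × b) (a × b) R) : Matrix a a R :=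
  of fun i i' => ∑ j, ρ (i, j) (i', j)

def partialSwap : Equiv.Perm ((a × b) × (a × b)) where
  toFun x := ((x.2.1, x.1.2), (x.1.1, x.2.2))
  invFun x := ((x.2.1, x.1.2), (x.1.1, x.2.2))
  left_inv _ := rfl
  right_inv _ := rfl

theorem trace_kronecker_mul_partialSwap_mul [CommSemiring R] (ρ σ : Matrix (a × b) (a × b) R)
    (P : Matrix a a R) :
    trace (ρ ⊗ₖ σ * partialSwap.permMatrix R *
        (P ⊗ₖ (1 : Matrix b b R) ⊗ₖ (1 : Matrix (a × b) (a × b) R))) =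
      trace (partialTraceRight ρ * partialTraceRight σ * P) :=
  calc _ = ∑ i, ∑ j, ∑ i', ∑ j', ∑ k, ρ (i, j) (i', j) * σ (i', j') (k, j') * P k i := by
          rw [Matrix.mul_assoc, PEquiv.toMatrix_toPEquiv_mul]
          simp [trace, mul_apply, partialSwap, Fintype.sum_prod_type, one_apply, ite_and]
    _ = ∑ i, ∑ i', ∑ k, partialTraceRight ρ i i' * partialTraceRight σ i' k * P k i := by
          simp only [partialTraceRight, of_apply, Finset.sum_mul_sum]
          simp_rw [Finset.sum_mul, Finset.sum_comm (γ := b) (α := a)]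
    _ = ∑ i, ∑ k, ∑ i', partialTraceRight ρ i i' * partialTraceRight σ i' k * P k i :=
          Finset.sum_congr rfl fun _ _ => Finset.sum_comm
    _ = _ := by simp only [trace, diag, mul_apply, Finset.sum_mul]

end Matrix

theorem lvp_partial_swap_trace_identity_general {a b : Type*}
    [Fintype a] [Fintype b] [DecidableEq a] [DecidableEq b]
    (ρ : Matrix (a × b) (a × b) ℂ) (P : Matrix a a ℂ) :
    Matrix.trace
      ((Matrix.of fun x y : (a × b) × (a × b) => ρ x.1 y.1 * ρ x.2 y.2) *
        (Matrix.of fun x z : (a × b) × (a × b) =>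
          if z.1.1 = x.2.1 ∧ z.2.1 = x.1.1 ∧ z.1.2 = x.1.2 ∧ z.2.2 = x.2.2
            then (1 : ℂ) else 0) *
        (Matrix.of fun u w : (a × b) × (a × b) =>
          if u.1.2 = w.1.2 ∧ u.2.1 = w.2.1 ∧ u.2.2 = w.2.2 then P u.1.1 w.1.1 else 0))
      = Matrix.trace ((Matrix.of fun i i' : a => ∑ j : b, ρ (i, j) (i', j)) ^ 2 * P) := by
  have swap_eq : (Matrix.of fun x z : (a × b) × (a × b) =>
      if z.1.1 = x.2.1 ∧ z.2.1 = x.1.1 ∧ z.1.2 = x.1.2 ∧ z.2.2 = x.2.2 then (1 : ℂ) else 0) =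
      partialSwap.permMatrix ℂ := by
    ext x z
    simp only [of_apply, PEquiv.toMatrix_apply, Equiv.toPEquiv_apply, Option.mem_def,
      Option.some_inj, partialSwap, Equiv.coe_fn_mk, Prod.ext_iff]
    exact if_congr (by tauto) rfl rfl
  have observable_eq : (Matrix.of fun u w : (a × b) × (a × b) =>
      if u.1.2 = w.1.2 ∧ u.2.1 = w.2.1 ∧ u.2.2 = w.2.2 then P u.1.1 w.1.1 else 0) =
      P ⊗ₖ (1 : Matrix b b ℂ) ⊗ₖ (1 : Matrix (a × b) (a × b) ℂ) := by
    ext u w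
    simp only [of_apply, kroneckerMap_apply, one_apply, Prod.ext_iff, mul_ite, mul_one, mul_zero]
    grind
  rw [swap_eq, observable_eq, sq]
  exact trace_kronecker_mul_partialSwap_mul ρ ρ P

/-- The identity `Tr[(ρ^{⊗2})·𝕊^{(A)}·(P ⊗ I)] = Tr[(ρ^{(A)})²·P]` underlying Localized
Virtual Purification with `n = 2` copies: a swap applied only to the `a`-components of the
two copies yields the second moment of the reduced density matrix `ρ^{A} = Tr_B[ρ]`. -/
theorem lvp_partial_swap_trace_identity {a b : Type*}
    [Fintype a] [Fintype b] [DecidableEq a] [DecidableEq b] [Nonempty a] [Nonempty b]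
    (ρ : Matrix (a × b) (a × b) ℂ) (P : Matrix a a ℂ) :
    Matrix.trace
      ((Matrix.of fun x y : (a × b) × (a × b) => ρ x.1 y.1 * ρ x.2 y.2) *
        (Matrix.of fun x z : (a × b) × (a × b) =>
          if z.1.1 = x.2.1 ∧ z.2.1 = x.1.1 ∧ z.1.2 = x.1.2 ∧ z.2.2 = x.2.2
            then (1 : ℂ) else 0) *
        (Matrix.of fun u w : (a × b) × (a × b) =>
          if u.1.2 = w.1.2 ∧ u.2.1 = w.2.1 ∧ u.2.2 = w.2.2 then P u.1.1 w.1.1 else 0))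
      = Matrix.trace ((Matrix.of fun i i' : a => ∑ j : b, ρ (i, j) (i', j)) ^ 2 * P) :=
  lvp_partial_swap_trace_identity_general ρ P
end
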